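/- Let a < b and let (Gⁿ)_{n∈ℕ} be convex functions on ℝ, each being the integrated distribution function Gⁿ(x) = ∫_{−∞}^x Fⁿ(s) ds of a probability measure Pⁿ with support contained in [a,b]. If Gⁿ → G uniformly on compact subsets of ℝ, then G is also the integrated distribution function of a probability measure P with support in [a,b], and Pⁿ → P weakly. -/

import Mathlib

/-!
The family `{Pⁿ}` lives on the compact interval `[a, b]`, so it is tight and, by
Prokhorov's theorem, relatively compact for weak convergence. By Tonelli,
`∫_{-∞}^x P(-∞, s] ds = ∫ (x - t)⁺ dP(t)`, and on `[a, ∞)` the ramp `t ↦ (x - t)⁺` agrees with a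
bounded continuous function; hence the integrated distribution function passes to weak limits, and
every cluster point of `(Pⁿ)` is a measure on `[a, b]` whose integrated distribution function is
`G`. Since the distribution function is the right derivative of the integrated one, there is only
one such measure, so the whole sequence converges to it.
-/

open Filter MeasureTheory Topology Set ProbabilityTheory BoundedContinuousFunction

noncomputable def integratedCDF (Q : Measure ℝ) (x : ℝ) : ℝ :=
  ∫ s in Iic x, (Q (Iic s)).toReal

lemma lintegral_Iic_measure_Iic (Q : Measure ℝ) [SFinite Q] (x : ℝ) :
    ∫⁻ s in Iic x, Q (Iic s) = ∫⁻ t, ENNReal.ofReal (x - t) ∂Q := by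
  let f : ℝ → ℝ → ENNReal := fun s t => (Iic s).indicator 1 t
  have hf : Measurable (Function.uncurry f) := by
    have : Function.uncurry f = {p : ℝ × ℝ | p.2 ≤ p.1}.indicator 1 := by
      ext p; simp [f, Set.indicator, Function.uncurry]
    rw [this]
    exact measurable_one.indicator (measurableSet_le measurable_snd measurable_fst)
  calc ∫⁻ s in Iic x, Q (Iic s)
      = ∫⁻ s in Iic x, ∫⁻ t, f s t ∂Q := by
        simp only [f, lintegral_indicator_one measurableSet_Iic]
    _ = ∫⁻ t, (∫⁻ s in Iic x, f s t) ∂Q := lintegral_lintegral_swap hf.aemeasurable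
    _ = ∫⁻ t, ENNReal.ofReal (x - t) ∂Q := by
        refine lintegral_congr fun t => ?_
        have : ∀ s, f s t = (Ici t).indicator 1 s := fun s => by simp [f, Set.indicator]
        simp only [this, lintegral_indicator_one measurableSet_Ici,
          Measure.restrict_apply measurableSet_Ici, Ici_inter_Iic, Real.volume_Icc]

lemma integratedCDF_eq_integral_posPart (Q : Measure ℝ) [IsFiniteMeasure Q] (x : ℝ) :
    integratedCDF Q x = ∫ t, max (x - t) 0 ∂Q := by
  simp only [← ENNReal.toReal_ofReal']
  rw [integratedCDF, integral_toReal, integral_toReal, lintegral_Iic_measure_Iic]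
  · fun_prop
  · exact ae_of_all _ fun _ => ENNReal.ofReal_lt_top
  · exact Monotone.measurable (fun _ _ h => measure_mono (Iic_subset_Iic.2 h)) |>.aemeasurable
  · exact ae_of_all _ fun _ => measure_lt_top _ _

noncomputable def clippedRamp (a x : ℝ) : ℝ →ᵇ ℝ :=
  .ofNormedAddCommGroup (fun t => max (x - max t a) 0) (by fun_prop) (max (x - a) 0) fun t => by
    rw [Real.norm_eq_abs, abs_of_nonneg (le_max_right _ _)]
    exact max_le_max_right _ (by linarith [le_max_right t a])

lemma integratedCDF_eq_integral_clippedRamp {Q : Measure ℝ} [IsFiniteMeasure Q] {a : ℝ}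
    (hQ : ∀ᵐ t ∂Q, a ≤ t) (x : ℝ) : integratedCDF Q x = ∫ t, clippedRamp a x t ∂Q := by
  rw [integratedCDF_eq_integral_posPart]
  refine integral_congr_ae (hQ.mono fun t ht => ?_)
  simp [clippedRamp, max_eq_left ht]

lemma tendsto_integratedCDF_of_tendsto {ι : Type*} {l : Filter ι}
    {μ : ι → ProbabilityMeasure ℝ} {ν : ProbabilityMeasure ℝ} (h : Tendsto μ l (𝓝 ν)) {a : ℝ}
    (hμ : ∀ i, ∀ᵐ t ∂(μ i : Measure ℝ), a ≤ t) (hν : ∀ᵐ t ∂(ν : Measure ℝ), a ≤ t) (x : ℝ) :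
    Tendsto (fun i => integratedCDF (μ i) x) l (𝓝 (integratedCDF ν x)) := by
  simp only [integratedCDF_eq_integral_clippedRamp (hμ _), integratedCDF_eq_integral_clippedRamp hν]
  exact ProbabilityMeasure.tendsto_iff_forall_integral_tendsto.1 h _

lemma ProbabilityMeasure.ae_mem_of_tendsto {Ω ι : Type*} [MeasurableSpace Ω] [TopologicalSpace Ω]
    [OpensMeasurableSpace Ω] [HasOuterApproxClosed Ω] {l : Filter ι} [l.NeBot]
    {μ : ι → ProbabilityMeasure Ω} {ν : ProbabilityMeasure Ω} (h : Tendsto μ l (𝓝 ν))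
    {F : Set Ω} (hF : IsClosed F) (hμ : ∀ᶠ i in l, ∀ᵐ ω ∂(μ i : Measure Ω), ω ∈ F) :
    ∀ᵐ ω ∂(ν : Measure Ω), ω ∈ F := by
  have := ProbabilityMeasure.le_liminf_measure_open_of_tendsto h hF.isOpen_compl
  rw [liminf_congr (hμ.mono fun i (hi : (μ i : Measure Ω) Fᶜ = 0) => hi), liminf_const] at this
  exact ae_iff.2 (nonpos_iff_eq_zero.1 this)

section RightDerivative

variable {Q : Measure ℝ} [IsProbabilityMeasure Q] {a : ℝ}

lemma cdf_eq_zero_of_lt (hQ : ∀ᵐ t ∂Q, a ≤ t) {s : ℝ} (hs : s < a) : cdf Q s = 0 := by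
  rw [cdf_eq_real, measureReal_def, ENNReal.toReal_eq_zero_iff]
  exact Or.inl (measure_mono_null (fun t ht => not_le.2 (lt_of_le_of_lt ht hs)) (ae_iff.1 hQ))

lemma integrableOn_cdf_Iic (hQ : ∀ᵐ t ∂Q, a ≤ t) (y : ℝ) : IntegrableOn (cdf Q) (Iic y) := by
  have hzero : IntegrableOn (cdf Q) (Iio a) :=
    integrableOn_zero.congr_fun (fun s hs => (cdf_eq_zero_of_lt hQ hs).symm) measurableSet_Iio
  refine (hzero.union (MonotoneOn.integrableOn_isCompact (isCompact_Icc (a := a) (b := y))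
    ((monotone_cdf Q).monotoneOn _))).mono_set fun s hs => ?_
  exact (lt_or_ge s a).imp id fun h => ⟨h, hs⟩

lemma integratedCDF_eq_integral_cdf (x : ℝ) : integratedCDF Q x = ∫ s in Iic x, cdf Q s := by
  simp only [integratedCDF, cdf_eq_real, measureReal_def]

lemma hasDerivWithinAt_integratedCDF (hQ : ∀ᵐ t ∂Q, a ≤ t) (x : ℝ) :
    HasDerivWithinAt (integratedCDF Q) (cdf Q x) (Ici x) x := by
  have hFTC : HasDerivWithinAt (fun y => ∫ s in x..y, cdf Q s) (cdf Q x) (Ici x) x :=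
    intervalIntegral.integral_hasDerivWithinAt_right (monotone_cdf Q).intervalIntegrable
      (monotone_cdf Q).measurable.stronglyMeasurable.stronglyMeasurableAtFilter
      (((cdf Q).right_continuous x).mono Ioi_subset_Ici_self)
  have hsplit : integratedCDF Q = fun y => integratedCDF Q x + ∫ s in x..y, cdf Q s :=
    funext fun y => by
      rw [integratedCDF_eq_integral_cdf, integratedCDF_eq_integral_cdf,
        ← intervalIntegral.integral_Iic_sub_Iic (integrableOn_cdf_Iic hQ x)
          (integrableOn_cdf_Iic hQ y), add_sub_cancel]
  rw [hsplit]
  exact hFTC.const_add _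

end RightDerivative

lemma eq_of_integratedCDF_eq {Q Q' : Measure ℝ} [IsProbabilityMeasure Q]
    [IsProbabilityMeasure Q'] {a : ℝ} (hQ : ∀ᵐ t ∂Q, a ≤ t) (hQ' : ∀ᵐ t ∂Q', a ≤ t)
    (h : integratedCDF Q = integratedCDF Q') : Q = Q' := by
  refine Measure.eq_of_cdf Q Q' (StieltjesFunction.ext fun x => ?_)
  exact (uniqueDiffWithinAt_Ici x).eq_deriv _ (hasDerivWithinAt_integratedCDF hQ x)
    (h ▸ hasDerivWithinAt_integratedCDF hQ' x)

lemma isTightMeasureSet_of_measure_compl_eq_zero {X : Type*} [TopologicalSpace X]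
    [MeasurableSpace X] {S : Set (Measure X)} {K : Set X} (hK : IsCompact K)
    (h : ∀ μ ∈ S, μ Kᶜ = 0) : IsTightMeasureSet S :=
  isTightMeasureSet_iff_exists_isCompact_measure_compl_le.2 fun _ _ =>
    ⟨K, hK, fun μ hμ => (h μ hμ).trans_le bot_le⟩

lemma integratedCDF_eq_of_mapClusterPt {ι : Type*} {l : Filter ι}
    {μ : ι → ProbabilityMeasure ℝ} {a b : ℝ} (hμ : ∀ i, ∀ᵐ t ∂(μ i : Measure ℝ), t ∈ Icc a b)
    {G : ℝ → ℝ} (hG : ∀ x, Tendsto (fun i => integratedCDF (μ i) x) l (𝓝 (G x)))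
    {ν : ProbabilityMeasure ℝ} (hν : MapClusterPt ν l μ) :
    (∀ᵐ t ∂(ν : Measure ℝ), t ∈ Icc a b) ∧ integratedCDF ν = G := by
  obtain ⟨U, hUl, hUν⟩ := mapClusterPt_iff_ultrafilter.1 hν
  have hνsupp := ProbabilityMeasure.ae_mem_of_tendsto hUν isClosed_Icc (.of_forall hμ)
  refine ⟨hνsupp, funext fun x => tendsto_nhds_unique ?_ ((hG x).mono_left hUl)⟩
  exact tendsto_integratedCDF_of_tendsto hUν (fun i => (hμ i).mono fun _ ht => ht.1)
    (hνsupp.mono fun _ ht => ht.1) x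

theorem integrated_cdf_uniform_limit_general (a b : ℝ)
    (P : ℕ → Measure ℝ) (hP : ∀ n, IsProbabilityMeasure (P n))
    (hPsupp : ∀ n, P n (Set.Icc a b)ᶜ = 0)
    (G : ℝ → ℝ)
    (hGconv : ∀ R : ℝ, 0 < R →
      TendstoUniformlyOn
        (fun n x => ∫ s in Set.Iic x, ((P n) (Set.Iic s)).toReal)
        G atTop (Set.Icc (-R) R)) :
    ∃ Plim : Measure ℝ, IsProbabilityMeasure Plim ∧ Plim (Set.Icc a b)ᶜ = 0 ∧
      (∀ x : ℝ, G x = ∫ s in Set.Iic x, (Plim (Set.Iic s)).toReal) ∧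
      ∀ f : ℝ → ℝ, Continuous f → (∃ C, ∀ x, |f x| ≤ C) →
        Tendsto (fun n => ∫ x, f x ∂(P n)) atTop (𝓝 (∫ x, f x ∂Plim)) := by
  let μ : ℕ → ProbabilityMeasure ℝ := fun n => ⟨P n, hP n⟩
  have hμ : ∀ n, ∀ᵐ t ∂(μ n : Measure ℝ), t ∈ Icc a b := fun n => ae_iff.2 (hPsupp n)
  have hG : ∀ x, Tendsto (fun n => integratedCDF (μ n) x) atTop (𝓝 (G x)) := fun x =>
    (hGconv (|x| + 1) (by positivity)).tendsto_at
      ⟨by linarith [neg_abs_le x], by linarith [le_abs_self x]⟩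
  have hK : IsCompact (closure (range μ)) := by
    refine isCompact_closure_of_isTightMeasureSet
      (isTightMeasureSet_of_measure_compl_eq_zero (isCompact_Icc (a := a) (b := b)) ?_)
    rintro _ ⟨_, ⟨n, rfl⟩, rfl⟩
    exact hPsupp n
  have hmem : ∀ n, μ n ∈ closure (range μ) := fun n => subset_closure (mem_range_self n)
  obtain ⟨ν, -, hν⟩ := hK.exists_mapClusterPt (f := atTop) (tendsto_principal.2 (.of_forall hmem))
  obtain ⟨hνsupp, hνG⟩ := integratedCDF_eq_of_mapClusterPt hμ hG hν
  have hlim : Tendsto μ atTop (𝓝 ν) := by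
    refine hK.tendsto_nhds_of_unique_mapClusterPt (.of_forall hmem) fun ν' _ hν' => ?_
    obtain ⟨hν'supp, hν'G⟩ := integratedCDF_eq_of_mapClusterPt hμ hG hν'
    exact ProbabilityMeasure.toMeasure_injective <| eq_of_integratedCDF_eq
      (hν'supp.mono fun _ ht => ht.1) (hνsupp.mono fun _ ht => ht.1) (hν'G.trans hνG.symm)
  refine ⟨ν, inferInstance, ae_iff.1 hνsupp, fun x => (congrFun hνG x).symm,
    fun f hf ⟨C, hC⟩ => ?_⟩
  exact ProbabilityMeasure.tendsto_iff_forall_integral_tendsto.1 hlim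
    (.ofNormedAddCommGroup f hf C hC)

/-- Corollary A.6: if `Gⁿ` are the (convex) integrated distribution
functions of probability measures `Pⁿ` supported in `[a,b]` and `Gⁿ → G` uniformly on
compact sets, then `G` is the integrated distribution function of a probability measure
`P` supported in `[a,b]` and `Pⁿ → P` weakly. -/
theorem integrated_cdf_uniform_limit (a b : ℝ) (hab : a < b)
    (P : ℕ → Measure ℝ) (hP : ∀ n, IsProbabilityMeasure (P n))
    (hPsupp : ∀ n, P n (Set.Icc a b)ᶜ = 0)
    (G : ℝ → ℝ)
    (hGconv : ∀ R : ℝ, 0 < R →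
      TendstoUniformlyOn
        (fun n x => ∫ s in Set.Iic x, ((P n) (Set.Iic s)).toReal)
        G atTop (Set.Icc (-R) R)) :
    ∃ Plim : Measure ℝ, IsProbabilityMeasure Plim ∧ Plim (Set.Icc a b)ᶜ = 0 ∧
      (∀ x : ℝ, G x = ∫ s in Set.Iic x, (Plim (Set.Iic s)).toReal) ∧
      ∀ f : ℝ → ℝ, Continuous f → (∃ C, ∀ x, |f x| ≤ C) →
        Tendsto (fun n => ∫ x, f x ∂(P n)) atTop (𝓝 (∫ x, f x ∂Plim)) :=
  integrated_cdf_uniform_limit_general a b P hP hPsupp G hGconv
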